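/- In a metric transportation game with n players and m buses, for any Nash equilibrium σ and any optimal outcome σ* for the utilitarian social cost U, it holds that U(σ) ≤ (2n/m + 1)·U(σ*). Consequently the Price of Anarchy for U is O(n/m). -/

import Mathlib

/-!
At equilibrium no player gains by moving to any bus `j`. Boarding bus `j`, player `i` rides
from her own position to the destination, then at most along the part of bus `j`'s current
route that comes after her, which is shorter than the closed tour `t → route of j → t`; by
the triangle inequality that tour costs at most twice the sum of the distances of its
passengers to `t`. Averaging over the `m` buses gives
`m · c_i(σ) ≤ m · d(i, t) + 2 Σ_k d(k, t)`, and summing over players,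
`m · U(σ) ≤ (m + 2n) Σ_k d(k, t)`. Finally every player pays at least her distance to `t`
in any outcome, so `Σ_k d(k, t) ≤ U(σ*)`.
-/

open Finset

/-- Length of a bus route that visits the points of `l` in order and then ends at the
destination `t` (the initial segment from the depot is ignored). -/
noncomputable def routeLen {V : Type*} [PseudoMetricSpace V] (t : V) (l : List V) : ℝ :=
  ∑ i ∈ Finset.range l.length, dist (l.getD i t) (l.getD (i + 1) t)

/-- The route of bus `j` under outcome `σ`: the players that chose bus `j`, in the order
given by the fixed permutation list `ord j` of bus `j`. -/
def busRoute {n m : ℕ} (ord : Fin m → List (Fin n)) (σ : Fin n → Fin m) (j : Fin m) :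
    List (Fin n) :=
  (ord j).filter (fun i => decide (σ i = j))

/-- `ord` gives, for every bus, a permutation of all the players. -/
def validOrd {n m : ℕ} (ord : Fin m → List (Fin n)) : Prop :=
  ∀ j : Fin m, (ord j).Nodup ∧ ∀ i : Fin n, i ∈ ord j

/-- The cost of player `i` under outcome `σ`: the distance traveled by `i`'s bus from the
location of `i` to the destination `t`. -/
noncomputable def playerCost {V : Type*} [PseudoMetricSpace V] {n m : ℕ}
    (x : Fin n → V) (t : V) (ord : Fin m → List (Fin n)) (σ : Fin n → Fin m)
    (i : Fin n) : ℝ :=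
  routeLen t
    (((busRoute ord σ (σ i)).drop ((busRoute ord σ (σ i)).idxOf i)).map x)

/-- The utilitarian social cost: the sum of the costs of all players. -/
noncomputable def socialU {V : Type*} [PseudoMetricSpace V] {n m : ℕ}
    (x : Fin n → V) (t : V) (ord : Fin m → List (Fin n)) (σ : Fin n → Fin m) : ℝ :=
  ∑ i : Fin n, playerCost x t ord σ i

/-- The egalitarian social cost: the largest cost of a player. -/
noncomputable def socialE {V : Type*} [PseudoMetricSpace V] {n m : ℕ}
    (x : Fin n → V) (t : V) (ord : Fin m → List (Fin n)) (σ : Fin n → Fin m) : ℝ :=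
  ⨆ i : Fin n, playerCost x t ord σ i

/-- `σ` is a (pure) Nash equilibrium: no player can decrease her cost by unilaterally
switching to another bus. -/
def isNash {V : Type*} [PseudoMetricSpace V] {n m : ℕ}
    (x : Fin n → V) (t : V) (ord : Fin m → List (Fin n)) (σ : Fin n → Fin m) : Prop :=
  ∀ i : Fin n, ∀ j : Fin m,
    playerCost x t ord σ i ≤ playerCost x t ord (Function.update σ i j) i

namespace List

variable {α : Type*} [DecidableEq α] {a : α}

theorem drop_idxOf_eq_cons {l : List α} (h : a ∈ l) :
    l.drop (l.idxOf a) = a :: l.drop (l.idxOf a + 1) := by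
  have hlt : l.idxOf a < l.length := idxOf_lt_length_iff.mpr h
  rw [drop_eq_getElem_cons hlt, getElem_idxOf hlt]

theorem drop_idxOf_append_cons {l₁ : List α} (h : a ∉ l₁) (l₂ : List α) :
    (l₁ ++ a :: l₂).drop ((l₁ ++ a :: l₂).idxOf a) = a :: l₂ := by
  rw [idxOf_append_of_notMem h, idxOf_cons_self, add_zero, drop_left]

end List

section RouteLength

variable {V : Type*} [PseudoMetricSpace V] (t : V)

theorem routeLen_cons (a : V) (l : List V) :
    routeLen t (a :: l) = dist a (l.getD 0 t) + routeLen t l := by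
  unfold routeLen
  rw [List.length_cons, Finset.sum_range_succ', add_comm]
  simp

theorem dist_getD_zero_le_routeLen (l : List V) : dist (l.getD 0 t) t ≤ routeLen t l := by
  induction l with
  | nil => simp [routeLen]
  | cons a l ih =>
    rw [routeLen_cons, List.getD_cons_zero]
    exact (dist_triangle a (l.getD 0 t) t).trans (by gcongr)

-- `routeLen t (t :: l)` is the length of the closed tour from `t` through `l` back to `t`.
theorem routeLen_cons_le (a : V) (l : List V) :
    routeLen t (a :: l) ≤ dist a t + routeLen t (t :: l) := by
  rw [routeLen_cons, routeLen_cons, ← add_assoc]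
  gcongr
  exact dist_triangle _ _ _

theorem routeLen_cons_self_mono {l₁ l₂ : List V} (h : l₁ <:+ l₂) :
    routeLen t (t :: l₁) ≤ routeLen t (t :: l₂) := by
  obtain ⟨s, rfl⟩ := h
  induction s with
  | nil => rfl
  | cons a s ih =>
    refine ih.trans ?_
    rw [List.cons_append, routeLen_cons, routeLen_cons, routeLen_cons, List.getD_cons_zero,
      ← add_assoc]
    gcongr
    exact dist_triangle _ _ _

theorem routeLen_cons_self_le_two_mul_sum (l : List V) :
    routeLen t (t :: l) ≤ 2 * (l.map (dist · t)).sum := by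
  induction l with
  | nil => simp [routeLen]
  | cons a l ih =>
    rw [routeLen_cons, List.getD_cons_zero, List.map_cons, List.sum_cons, dist_comm t a]
    linarith [routeLen_cons_le t a l]

end RouteLength

section Buses

variable {n m : ℕ} {ord : Fin m → List (Fin n)}

theorem mem_busRoute (hord : validOrd ord) (σ : Fin n → Fin m) (i : Fin n) :
    i ∈ busRoute ord σ (σ i) := by
  simp [busRoute, (hord (σ i)).2 i]

theorem sum_map_busRoute {M : Type*} [AddCommMonoid M] (hord : validOrd ord)
    (σ : Fin n → Fin m) (j : Fin m) (f : Fin n → M) :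
    ((busRoute ord σ j).map f).sum = ∑ k ∈ univ.filter (σ · = j), f k := by
  rw [busRoute, ← List.sum_toFinset f ((hord j).1.filter _)]
  congr 1
  ext k
  simp [(hord j).2 k]

theorem busRoute_update_drop_idxOf (hord : validOrd ord) (σ : Fin n → Fin m) (i : Fin n)
    (j : Fin m) : ∃ B, B <:+ busRoute ord σ j ∧
      (busRoute ord (Function.update σ i j) j).drop
        ((busRoute ord (Function.update σ i j) j).idxOf i) = i :: B := by
  obtain ⟨ω₁, ω₂, hsplit⟩ := List.append_of_mem ((hord j).2 i)
  have hi : i ∉ ω₁ ++ ω₂ := by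
    have := (hord j).1
    rw [hsplit, List.nodup_middle] at this
    exact List.Nodup.notMem this
  have hfilter : ∀ ω : List (Fin n), i ∉ ω →
      ω.filter (fun k => decide (Function.update σ i j k = j)) = ω.filter (σ · = j) :=
    fun ω hω => List.filter_congr fun k hk => by
      rw [Function.update_of_ne (ne_of_mem_of_not_mem hk hω)]
  refine ⟨ω₂.filter (σ · = j), ?_, ?_⟩
  · rw [busRoute, hsplit]
    exact ((List.suffix_cons i ω₂).trans (List.suffix_append ω₁ _)).filter _
  · have hroute : busRoute ord (Function.update σ i j) j =
        ω₁.filter (σ · = j) ++ i :: ω₂.filter (σ · = j) := by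
      rw [busRoute, hsplit, List.filter_append, List.filter_cons_of_pos (by simp),
        hfilter ω₁ fun h => hi (List.mem_append_left _ h),
        hfilter ω₂ fun h => hi (List.mem_append_right _ h)]
    rw [hroute]
    exact List.drop_idxOf_append_cons (fun h => hi (List.mem_append_left _
      (List.mem_of_mem_filter h))) _

variable {V : Type*} [PseudoMetricSpace V] (x : Fin n → V) (t : V)

theorem dist_le_playerCost (hord : validOrd ord) (σ : Fin n → Fin m) (i : Fin n) :
    dist (x i) t ≤ playerCost x t ord σ i := by
  rw [playerCost, List.drop_idxOf_eq_cons (mem_busRoute hord σ i), List.map_cons]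
  simpa using dist_getD_zero_le_routeLen t (x i :: _)

theorem playerCost_update_le (hord : validOrd ord) (σ : Fin n → Fin m) (i : Fin n)
    (j : Fin m) :
    playerCost x t ord (Function.update σ i j) i ≤
      dist (x i) t + 2 * ∑ k ∈ univ.filter (σ · = j), dist (x k) t := by
  obtain ⟨B, hB, hdrop⟩ := busRoute_update_drop_idxOf hord σ i j
  rw [playerCost, Function.update_self, hdrop, List.map_cons,
    ← sum_map_busRoute hord σ j fun k => dist (x k) t]
  calc routeLen t (x i :: B.map x)
      ≤ dist (x i) t + routeLen t (t :: (busRoute ord σ j).map x) :=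
        (routeLen_cons_le t _ _).trans (by gcongr; exact routeLen_cons_self_mono t (hB.map x))
    _ ≤ _ := by
        grw [routeLen_cons_self_le_two_mul_sum]
        rw [List.map_map]
        rfl

theorem isNash.mul_playerCost_le (hord : validOrd ord) {σ : Fin n → Fin m}
    (hNE : isNash x t ord σ) (i : Fin n) :
    m * playerCost x t ord σ i ≤ m * dist (x i) t + 2 * ∑ k, dist (x k) t := by
  calc m * playerCost x t ord σ i = ∑ _j : Fin m, playerCost x t ord σ i := by simp
    _ ≤ ∑ j : Fin m, (dist (x i) t + 2 * ∑ k ∈ univ.filter (σ · = j), dist (x k) t) :=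
        sum_le_sum fun j _ => (hNE i j).trans (playerCost_update_le x t hord σ i j)
    _ = m * dist (x i) t + 2 * ∑ k, dist (x k) t := by
        rw [sum_add_distrib, ← mul_sum, sum_fiberwise univ σ fun k => dist (x k) t]
        simp

theorem isNash.mul_socialU_le (hord : validOrd ord) {σ : Fin n → Fin m}
    (hNE : isNash x t ord σ) :
    m * socialU x t ord σ ≤ (m + 2 * n) * ∑ k, dist (x k) t := by
  calc m * socialU x t ord σ ≤ ∑ i, (m * dist (x i) t + 2 * ∑ k, dist (x k) t) := by
        rw [socialU, mul_sum]
        exact sum_le_sum fun i _ => hNE.mul_playerCost_le x t hord i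
    _ = (m + 2 * n) * ∑ k, dist (x k) t := by
        rw [sum_add_distrib, ← mul_sum]
        simp only [sum_const, card_univ, Fintype.card_fin, nsmul_eq_mul]
        ring

theorem sum_dist_le_socialU (hord : validOrd ord) (σ : Fin n → Fin m) :
    ∑ k, dist (x k) t ≤ socialU x t ord σ :=
  sum_le_sum fun i _ => dist_le_playerCost x t hord σ i

end Buses

theorem stmt6_general {V : Type*} [MetricSpace V] {n m : ℕ} (hm : 1 ≤ m)
    (x : Fin n → V) (t : V) (ord : Fin m → List (Fin n)) (hord : validOrd ord)
    (σ σstar : Fin n → Fin m) (hNE : isNash x t ord σ) :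
    socialU x t ord σ ≤ (2 * (n : ℝ) / (m : ℝ) + 1) * socialU x t ord σstar := by
  have hm0 : (0 : ℝ) < m := by exact_mod_cast hm
  rw [show 2 * (n : ℝ) / m + 1 = (m + 2 * n) / m by field_simp; ring, div_mul_eq_mul_div,
    le_div_iff₀ hm0, mul_comm]
  calc m * socialU x t ord σ ≤ (m + 2 * n) * ∑ k, dist (x k) t := hNE.mul_socialU_le x t hord
    _ ≤ (m + 2 * n) * socialU x t ord σstar := by
        gcongr
        exact sum_dist_le_socialU x t hord σstar

/-- for any Nash equilibrium `σ` and any optimal outcome `σ*` for the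
utilitarian social cost `U`, `U(σ) ≤ (2n/m + 1)·U(σ*)`; hence `PoA(U) = O(n/m)`. -/
theorem stmt6 {V : Type*} [MetricSpace V] {n m : ℕ} (hm : 1 ≤ m)
    (x : Fin n → V) (t : V) (ord : Fin m → List (Fin n)) (hord : validOrd ord)
    (σ σstar : Fin n → Fin m) (hNE : isNash x t ord σ)
    (hopt : ∀ σ' : Fin n → Fin m, socialU x t ord σstar ≤ socialU x t ord σ') :
    socialU x t ord σ ≤ (2 * (n : ℝ) / (m : ℝ) + 1) * socialU x t ord σstar :=
  stmt6_general hm x t ord hord σ σstar hNE
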